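/- (Linearization lower bound for the convex body maximal function) Let W be a matrix weight on I₀ and f ∈ L²_W(ℝ^d). Let 𝒞 ⊆ 𝒟, and for each I ∈ 𝒞 let S_I ⊆ I be a measurable set of positive measure such that the sets (S_I)_{I∈𝒞} are pairwise disjoint, and let φ_I : I → [-1,1] be measurable. Then Σ_{I∈𝒞} |S_I| · |⟨W⟩_{S_I}^{1/2} ⟨W⟩_I^{-1} ⟨φ_I W f⟩_I|²_{ℝ^d} ≤ ‖M^c_W f‖²_{L²}. -/

import Mathlib

open MeasureTheory Set
open scoped ENNReal Matrix Pointwise Classical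

noncomputable section

/-- The unit interval `I₀ = [0,1)`. -/
def I0 : Set ℝ := Set.Ico (0 : ℝ) 1

/-- The dyadic interval `[k/2^n, (k+1)/2^n)`. -/
def dyad (n k : ℕ) : Set ℝ := Set.Ico ((k : ℝ) / 2 ^ n) (((k : ℝ) + 1) / 2 ^ n)

/-- Real `d × d` matrices. -/
abbrev Mat (d : ℕ) := Matrix (Fin d) (Fin d) ℝ

/-- The Euclidean norm `|v|_{ℝ^d}`. -/
def enorm2 {d : ℕ} (v : Fin d → ℝ) : ℝ := Real.sqrt (∑ i, v i ^ 2)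

/-- The Euclidean inner product `⟨v, w⟩_{ℝ^d}`. -/
def dotp {d : ℕ} (v w : Fin d → ℝ) : ℝ := ∑ i, v i * w i

open scoped Classical in
/-- The positive semidefinite square root of a positive semidefinite matrix
(junk value `0` if the matrix is not positive semidefinite). -/
def matSqrt {d : ℕ} (A : Mat d) : Mat d := if h : A.PosSemidef then
    h.1.eigenvectorUnitary.1 * Matrix.diagonal ((↑) ∘ Real.sqrt ∘ h.1.eigenvalues) *
      (star h.1.eigenvectorUnitary : Mat d) else 0

/-- Order in the sense of quadratic forms: `A ⩽ B` iff `B - A` is positive semidefinite. -/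
def matLE {d : ℕ} (A B : Mat d) : Prop := (B - A).PosSemidef

/-- The average `⟨g⟩_I = |I|⁻¹ ∫_I g` of a (scalar- or vector-valued) function. -/
def avgOn {E : Type*} [NormedAddCommGroup E] [NormedSpace ℝ E] (I : Set ℝ) (g : ℝ → E) : E :=
  (volume I).toReal⁻¹ • ∫ x in I, g x

/-- The entrywise average `⟨W⟩_I` of a matrix-valued function. -/
def avgMat {d : ℕ} (I : Set ℝ) (W : ℝ → Mat d) : Mat d :=
  Matrix.of fun i j => avgOn I fun x => W x i j

/-- A matrix weight on `I₀`: an integrable function with symmetric values,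
positive definite a.e. on `I₀`. -/
structure IsMatrixWeight (d : ℕ) (W : ℝ → Mat d) : Prop where
  intOn : ∀ i j, IntegrableOn (fun x => W x i j) I0
  symm : ∀ x, (W x).IsSymm
  posdef : ∀ᵐ x ∂(volume.restrict I0), (W x).PosDef

/-- Membership in `L²_W(ℝ^d)`. -/
def MemL2W {d : ℕ} (W : ℝ → Mat d) (f : ℝ → Fin d → ℝ) : Prop :=
  Measurable f ∧ IntegrableOn (fun x => dotp (W x *ᵥ f x) (f x)) I0

/-- The squared norm `‖f‖²_{L²_W} = ∫_{I₀} ⟨W(x) f(x), f(x)⟩ dx`. -/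
def l2normSq {d : ℕ} (W : ℝ → Mat d) (f : ℝ → Fin d → ℝ) : ℝ :=
  ∫ x in I0, dotp (W x *ᵥ f x) (f x)

/-- The average `⟨φ W f⟩_I = |I|⁻¹ ∫_I φ(y) W(y) f(y) dy`. -/
def avgPhiWf {d : ℕ} (I : Set ℝ) (φ : ℝ → ℝ) (W : ℝ → Mat d) (f : ℝ → Fin d → ℝ) :
    Fin d → ℝ :=
  avgOn I fun y => φ y • (W y *ᵥ f y)

/-- Admissible functions `φ : I → [-1,1]`, measurable. -/
def Adm (I : Set ℝ) (φ : ℝ → ℝ) : Prop :=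
  Measurable φ ∧ ∀ y ∈ I, φ y ∈ Set.Icc (-1 : ℝ) 1

/-- The matrix-weighted dyadic convex body maximal function `M^c_W f`,
valued in `ℝ≥0∞`. -/
def McW {d : ℕ} (W : ℝ → Mat d) (f : ℝ → Fin d → ℝ) (x : ℝ) : ℝ≥0∞ :=
  ⨆ (n : ℕ) (k : ℕ) (_ : k < 2 ^ n ∧ x ∈ dyad n k) (φ : ℝ → ℝ) (_ : Adm (dyad n k) φ),
    ENNReal.ofReal
      (enorm2 (matSqrt (W x) *ᵥ ((avgMat (dyad n k) W)⁻¹ *ᵥ avgPhiWf (dyad n k) φ W f)))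

/-!
For `x ∈ S_I` the pair `(I, φ_I)` competes in the supremum defining `M^c_W f(x)`, so with
`v_I = ⟨W⟩_I⁻¹ ⟨φ_I W f⟩_I` we get `⟨W(x) v_I, v_I⟩ = |W(x)^{1/2} v_I|² ≤ (M^c_W f(x))²`.
Integrating over `S_I` turns the left side into `|S_I| ⟨⟨W⟩_{S_I} v_I, v_I⟩
= |S_I| |⟨W⟩_{S_I}^{1/2} v_I|²`, and since the `S_I` are disjoint subsets of `I₀` the
integrals over them add up to at most `‖M^c_W f‖²_{L²}`.
-/

theorem enorm2_nonneg {d : ℕ} (v : Fin d → ℝ) : 0 ≤ enorm2 v := Real.sqrt_nonneg _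

theorem enorm2_sq {d : ℕ} (v : Fin d → ℝ) : enorm2 v ^ 2 = v ⬝ᵥ v := by
  rw [enorm2, Real.sq_sqrt (Finset.sum_nonneg fun i _ => sq_nonneg _)]
  simp only [dotProduct, sq]

theorem mulVec_dotProduct_mulVec_eq_transpose_mul {n : Type*} [Fintype n] (R : Matrix n n ℝ)
    (v : n → ℝ) :
    (R *ᵥ v) ⬝ᵥ (R *ᵥ v) = ((Rᵀ * R) *ᵥ v) ⬝ᵥ v := by
  rw [dotProduct_comm, Matrix.dotProduct_mulVec, ← Matrix.mulVec_transpose, Matrix.mulVec_mulVec]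

theorem mulVec_dotProduct_eq_sum {n : Type*} [Fintype n] (M : Matrix n n ℝ) (v : n → ℝ) :
    (M *ᵥ v) ⬝ᵥ v = ∑ i, ∑ j, M i j * (v j * v i) := by
  simp only [dotProduct, Matrix.mulVec, Finset.sum_mul, mul_assoc]

section matSqrt

variable {d : ℕ} {A : Mat d}

theorem matSqrt_eq_cfc (hA : A.PosSemidef) : matSqrt A = cfc Real.sqrt A := by
  rw [hA.1.cfc_eq, Matrix.IsHermitian.cfc, Unitary.conjStarAlgAut_apply, matSqrt, dif_pos hA]
  rfl

theorem matSqrt_mul_self (hA : A.PosSemidef) : matSqrt A * matSqrt A = A := by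
  have hsa : IsSelfAdjoint A := hA.1
  rw [matSqrt_eq_cfc hA, ← cfc_mul ..]
  conv_rhs => rw [← cfc_id' ℝ A]
  refine cfc_congr fun x hx => Real.mul_self_sqrt ?_
  exact (Matrix.posSemidef_iff_isHermitian_and_spectrum_nonneg.mp hA).2 hx

theorem matSqrt_transpose (hA : A.PosSemidef) : (matSqrt A)ᵀ = matSqrt A := by
  rw [matSqrt_eq_cfc hA, ← Matrix.conjTranspose_eq_transpose_of_trivial]
  exact cfc_predicate Real.sqrt A

theorem enorm2_matSqrt_mulVec_sq (hA : A.PosSemidef) (v : Fin d → ℝ) :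
    enorm2 (matSqrt A *ᵥ v) ^ 2 = (A *ᵥ v) ⬝ᵥ v := by
  rw [enorm2_sq, mulVec_dotProduct_mulVec_eq_transpose_mul, matSqrt_transpose hA,
    matSqrt_mul_self hA]

end matSqrt

section avgMat

variable {d : ℕ} {W : ℝ → Mat d} {S : Set ℝ}

theorem avgOn_eq_setAverage {E : Type*} [NormedAddCommGroup E] [NormedSpace ℝ E]
    (I : Set ℝ) (g : ℝ → E) : avgOn I g = ⨍ x in I, g x :=
  (setAverage_eq volume g I).symm

theorem integrableOn_dotProduct_mulVec (hint : ∀ i j, IntegrableOn (fun x => W x i j) S)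
    (v : Fin d → ℝ) : IntegrableOn (fun x => (W x *ᵥ v) ⬝ᵥ v) S := by
  simp only [mulVec_dotProduct_eq_sum]
  exact integrable_finsetSum _ fun i _ =>
    integrable_finsetSum _ fun j _ => (hint i j).mul_const _

theorem avgOn_dotProduct_mulVec (hint : ∀ i j, IntegrableOn (fun x => W x i j) S)
    (v : Fin d → ℝ) : avgOn S (fun x => (W x *ᵥ v) ⬝ᵥ v) = (avgMat S W *ᵥ v) ⬝ᵥ v := by
  simp only [avgOn, avgMat, mulVec_dotProduct_eq_sum, Matrix.of_apply, smul_eq_mul]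
  rw [integral_finsetSum _ fun i _ =>
    integrable_finsetSum _ fun j _ => (hint i j).mul_const _, Finset.mul_sum]
  refine Finset.sum_congr rfl fun i _ => ?_
  rw [integral_finsetSum _ fun j _ => (hint i j).mul_const _, Finset.mul_sum]
  refine Finset.sum_congr rfl fun j _ => ?_
  rw [integral_mul_const, mul_assoc]

theorem measure_mul_dotProduct_avgMat_mulVec (hS : volume S ≠ ⊤)
    (hint : ∀ i j, IntegrableOn (fun x => W x i j) S) (v : Fin d → ℝ) :
    (volume S).toReal * ((avgMat S W *ᵥ v) ⬝ᵥ v) = ∫ x in S, (W x *ᵥ v) ⬝ᵥ v := by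
  rw [← avgOn_dotProduct_mulVec hint, avgOn_eq_setAverage]
  exact measure_smul_setAverage _ hS

theorem avgMat_posSemidef (hint : ∀ i j, IntegrableOn (fun x => W x i j) S)
    (hpos : ∀ᵐ x ∂volume.restrict S, (W x).PosSemidef) : (avgMat S W).PosSemidef := by
  refine Matrix.PosSemidef.of_dotProduct_mulVec_nonneg ?_ fun u => ?_
  · ext i j
    simp only [Matrix.conjTranspose_apply, star_trivial, avgMat, Matrix.of_apply, avgOn]
    congr 1
    exact integral_congr_ae (hpos.mono fun x hx => hx.1.apply i j)
  · rw [star_trivial, dotProduct_comm, ← avgOn_dotProduct_mulVec hint, avgOn]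
    exact smul_nonneg (inv_nonneg.mpr ENNReal.toReal_nonneg)
      (integral_nonneg_of_ae (hpos.mono fun x hx => by
        simpa only [Pi.zero_apply, star_trivial, dotProduct_comm] using
          hx.dotProduct_mulVec_nonneg u))

theorem ofReal_measure_mul_enorm2_matSqrt_avgMat_sq_le (hS : MeasurableSet S)
    (hSfin : volume S ≠ ⊤) (hint : ∀ i j, IntegrableOn (fun x => W x i j) S)
    (hpos : ∀ᵐ x ∂volume.restrict S, (W x).PosSemidef) (v : Fin d → ℝ) {F : ℝ → ℝ≥0∞}
    (hF : ∀ x ∈ S, ENNReal.ofReal (enorm2 (matSqrt (W x) *ᵥ v)) ≤ F x) :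
    ENNReal.ofReal ((volume S).toReal * enorm2 (matSqrt (avgMat S W) *ᵥ v) ^ 2) ≤
      ∫⁻ x in S, F x ^ 2 := by
  have hnonneg : 0 ≤ᵐ[volume.restrict S] fun x => (W x *ᵥ v) ⬝ᵥ v :=
    hpos.mono fun x hx => by
      simpa only [Pi.zero_apply, ← enorm2_matSqrt_mulVec_sq hx] using sq_nonneg _
  calc ENNReal.ofReal ((volume S).toReal * enorm2 (matSqrt (avgMat S W) *ᵥ v) ^ 2)
      = ENNReal.ofReal (∫ x in S, (W x *ᵥ v) ⬝ᵥ v) := by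
        rw [enorm2_matSqrt_mulVec_sq (avgMat_posSemidef hint hpos),
          measure_mul_dotProduct_avgMat_mulVec hSfin hint]
    _ = ∫⁻ x in S, ENNReal.ofReal ((W x *ᵥ v) ⬝ᵥ v) :=
        ofReal_integral_eq_lintegral_ofReal (integrableOn_dotProduct_mulVec hint v) hnonneg
    _ ≤ ∫⁻ x in S, F x ^ 2 := by
        refine lintegral_mono_ae ?_
        filter_upwards [hpos, ae_restrict_mem hS] with x hx hxS
        rw [← enorm2_matSqrt_mulVec_sq hx, ENNReal.ofReal_pow (enorm2_nonneg _)]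
        gcongr
        exact hF x hxS

end avgMat

theorem dyad_subset_I0 {n k : ℕ} (hk : k < 2 ^ n) : dyad n k ⊆ I0 := by
  rintro x ⟨hlo, hhi⟩
  refine ⟨le_trans (by positivity) hlo, hhi.trans_le ?_⟩
  rw [div_le_one (by positivity)]
  exact_mod_cast Nat.succ_le_of_lt hk

theorem IsMatrixWeight.integrableOn {d : ℕ} {W : ℝ → Mat d} (hW : IsMatrixWeight d W)
    {S : Set ℝ} (hS : S ⊆ I0) (i j : Fin d) : IntegrableOn (fun x => W x i j) S :=
  (hW.intOn i j).mono_set hS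

theorem IsMatrixWeight.ae_posSemidef {d : ℕ} {W : ℝ → Mat d} (hW : IsMatrixWeight d W)
    {S : Set ℝ} (hS : S ⊆ I0) : ∀ᵐ x ∂volume.restrict S, (W x).PosSemidef :=
  (ae_restrict_of_ae_restrict_of_subset hS hW.posdef).mono fun _ hx => hx.posSemidef

theorem ofReal_enorm2_le_McW {d : ℕ} (W : ℝ → Mat d) (f : ℝ → Fin d → ℝ) {n k : ℕ}
    (hk : k < 2 ^ n) {x : ℝ} (hx : x ∈ dyad n k) {ψ : ℝ → ℝ} (hψ : Adm (dyad n k) ψ) :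
    ENNReal.ofReal (enorm2 (matSqrt (W x) *ᵥ
      ((avgMat (dyad n k) W)⁻¹ *ᵥ avgPhiWf (dyad n k) ψ W f))) ≤ McW W f x :=
  le_iSup_of_le n <| le_iSup_of_le k <| le_iSup_of_le ⟨hk, hx⟩ <|
    le_iSup_of_le ψ <| le_iSup_of_le hψ le_rfl

theorem ofReal_measure_mul_sq_le_setLIntegral_McW_sq {d : ℕ} {W : ℝ → Mat d}
    (hW : IsMatrixWeight d W) (f : ℝ → Fin d → ℝ) {n k : ℕ} (hk : k < 2 ^ n) {S : Set ℝ}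
    (hS : MeasurableSet S) (hSI : S ⊆ dyad n k) {ψ : ℝ → ℝ} (hψ : Adm (dyad n k) ψ) :
    ENNReal.ofReal ((volume S).toReal * enorm2 (matSqrt (avgMat S W) *ᵥ
      ((avgMat (dyad n k) W)⁻¹ *ᵥ avgPhiWf (dyad n k) ψ W f)) ^ 2) ≤
      ∫⁻ x in S, McW W f x ^ 2 := by
  have hS0 : S ⊆ I0 := hSI.trans (dyad_subset_I0 hk)
  have hSfin : volume S ≠ ⊤ := ((measure_mono hS0).trans_lt measure_Ico_lt_top).ne
  exact ofReal_measure_mul_enorm2_matSqrt_avgMat_sq_le hS hSfin (hW.integrableOn hS0)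
    (hW.ae_posSemidef hS0) _ fun x hx => ofReal_enorm2_le_McW W f hk (hSI hx) hψ

theorem linearization_lower_bound_general {d : ℕ} (W : ℝ → Mat d) (hW : IsMatrixWeight d W)
    (f : ℝ → Fin d → ℝ)
    (C : Set (ℕ × ℕ)) (hC : ∀ p ∈ C, p.2 < 2 ^ p.1)
    (S : ℕ × ℕ → Set ℝ)
    (hSmeas : ∀ p ∈ C, MeasurableSet (S p))
    (hSsub : ∀ p ∈ C, S p ⊆ dyad p.1 p.2)
    (hdisj : ∀ p ∈ C, ∀ q ∈ C, p ≠ q → S p ∩ S q = ∅)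
    (φ : ℕ × ℕ → ℝ → ℝ) (hφ : ∀ p ∈ C, Adm (dyad p.1 p.2) (φ p)) :
    (∑' p : C,
        ENNReal.ofReal
          ((volume (S p)).toReal *
            enorm2 (matSqrt (avgMat (S p) W) *ᵥ
              ((avgMat (dyad (p : ℕ × ℕ).1 (p : ℕ × ℕ).2) W)⁻¹ *ᵥ
                avgPhiWf (dyad (p : ℕ × ℕ).1 (p : ℕ × ℕ).2) (φ p) W f)) ^ 2)) ≤
      ∫⁻ x in I0, (McW W f x) ^ 2 := by
  have hpairwise : Pairwise fun p q : C => Disjoint (S p) (S q) := fun p q hpq =>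
    Set.disjoint_iff_inter_eq_empty.mpr (hdisj p p.2 q q.2 (Subtype.coe_injective.ne hpq))
  calc _ ≤ ∑' p : C, ∫⁻ x in S p, McW W f x ^ 2 := ENNReal.tsum_le_tsum fun p =>
        ofReal_measure_mul_sq_le_setLIntegral_McW_sq hW f (hC p p.2) (hSmeas p p.2)
          (hSsub p p.2) (hφ p p.2)
    _ = ∫⁻ x in ⋃ p : C, S p, McW W f x ^ 2 :=
        (lintegral_iUnion (fun p : C => hSmeas p p.2) hpairwise _).symm
    _ ≤ ∫⁻ x in I0, McW W f x ^ 2 := lintegral_mono_set <| Set.iUnion_subset fun p =>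
        (hSsub p p.2).trans (dyad_subset_I0 (hC p p.2))

/-- **Linearization lower bound for the convex body maximal function.**
For `𝒞 ⊆ 𝒟`, pairwise disjoint measurable sets `S_I ⊆ I` of positive measure, and
measurable `φ_I : I → [-1,1]` (`I ∈ 𝒞`),
`Σ_{I∈𝒞} |S_I| |⟨W⟩_{S_I}^{1/2} ⟨W⟩_I⁻¹ ⟨φ_I W f⟩_I|² ≤ ‖M^c_W f‖²_{L²}`. -/
theorem linearization_lower_bound {d : ℕ} (W : ℝ → Mat d) (hW : IsMatrixWeight d W)
    (f : ℝ → Fin d → ℝ) (hf : MemL2W W f)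
    (C : Set (ℕ × ℕ)) (hC : ∀ p ∈ C, p.2 < 2 ^ p.1)
    (S : ℕ × ℕ → Set ℝ)
    (hSmeas : ∀ p ∈ C, MeasurableSet (S p))
    (hSsub : ∀ p ∈ C, S p ⊆ dyad p.1 p.2)
    (hSpos : ∀ p ∈ C, 0 < volume (S p))
    (hdisj : ∀ p ∈ C, ∀ q ∈ C, p ≠ q → S p ∩ S q = ∅)
    (φ : ℕ × ℕ → ℝ → ℝ) (hφ : ∀ p ∈ C, Adm (dyad p.1 p.2) (φ p)) :
    (∑' p : C,
        ENNReal.ofReal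
          ((volume (S p)).toReal *
            enorm2 (matSqrt (avgMat (S p) W) *ᵥ
              ((avgMat (dyad (p : ℕ × ℕ).1 (p : ℕ × ℕ).2) W)⁻¹ *ᵥ
                avgPhiWf (dyad (p : ℕ × ℕ).1 (p : ℕ × ℕ).2) (φ p) W f)) ^ 2)) ≤
      ∫⁻ x in I0, (McW W f x) ^ 2 :=
  linearization_lower_bound_general W hW f C hC S hSmeas hSsub hdisj φ hφ
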